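/- Assume η > 0 and let λ₁, λ₂, λ₃ > 0 satisfy λ₂ ≥ λ₃·η. Let β, γ ∈ M(coord). (a) If γ' ∈ M(coord) with ⟦γ'⟧ ≥ 1 and n' ∈ ℕ^d with |n'| < η satisfy (z^{γ'}D^{(n')})_β^γ ≠ 0, then |β|_≺ > |γ|_≺. (b) If (∂_i)_β^γ ≠ 0 for some i ∈ {1,…,d}, then |β|_≺ > |γ|_≺. -/

import Mathlib

open scoped Classical

noncomputable section

/-- The set of `d`-tuples of natural numbers, `ℕ^d`. -/
abbrev Nd (d : ℕ) : Type := Fin d → ℕ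

/-- Multi-indices over `ℕ^d`: finitely supported functions `ℕ^d → ℕ`. -/
abbrev MNd (d : ℕ) : Type := Nd d →₀ ℕ

/-- The coordinate set `coord = (𝔏 × M(ℕ^d)) ⊔ ℕ^d`, where `𝔏 = 𝔏⁻ ∪ {0}` is
modelled as `Option Lm` (with `none` playing the role of the element `0`). -/
abbrev Coord (Lm : Type) (d : ℕ) : Type := (Option Lm × MNd d) ⊕ Nd d

/-- Multi-indices over `coord`. -/
abbrev MCoord (Lm : Type) (d : ℕ) : Type := Coord Lm d →₀ ℕ

variable {Lm : Type} {d : ℕ}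

/-- Length `ℓ(m)` of a multi-index. -/
def mlen {I : Type} (m : I →₀ ℕ) : ℕ := m.sum fun _ v => v

/-- The `i`-th unit vector of `ℕ^d`. -/
def unitNd (i : Fin d) : Nd d := Pi.single i 1

/-- The coefficient `(z^{γ'} D^{(n')})_β^γ`. -/
def coefZD (γ' : MCoord Lm d) (n' : Nd d) (β γ : MCoord Lm d) : ℝ :=
  (γ.sum fun x v =>
    match x with
    | Sum.inl (l, k) =>
        (v : ℝ) * ((k n' : ℝ) + 1) *
          (if β + Finsupp.single (Sum.inl (l, k)) 1 =
              γ + Finsupp.single (Sum.inl (l, k + Finsupp.single n' 1)) 1 + γ'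
           then 1 else 0)
    | Sum.inr _ => 0) +
  ((γ (Sum.inr n') : ℝ) *
    (if β + Finsupp.single (Sum.inr n') 1 = γ + γ' then 1 else 0))

/-- The coefficient `(D^{(n')})_β^γ`. -/
def coefD (n' : Nd d) (β γ : MCoord Lm d) : ℝ := coefZD 0 n' β γ

/-- The coefficient `(∂_i)_β^γ`. -/
def coefPartial (i : Fin d) (β γ : MCoord Lm d) : ℝ :=
  ∑ᶠ n : Nd d,
    ((n i : ℝ) + 1) * coefZD (Finsupp.single (Sum.inr (n + unitNd i)) 1) n β γ

/-- `[β]`. -/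
def brkt (β : MCoord Lm d) : ℤ :=
  β.sum fun x v =>
    match x with
    | Sum.inl (_, k) => (1 - (mlen k : ℤ)) * (v : ℤ)
    | Sum.inr _ => (v : ℤ)

/-- Noise homogeneity `⟦β⟧`. -/
def nh (β : MCoord Lm d) : ℕ :=
  β.sum fun x v =>
    match x with
    | Sum.inl (some _, _) => v
    | Sum.inl (none, _) => 0
    | Sum.inr _ => 0

/-- Scaled degree `|n|` of `n ∈ ℕ^d`. -/
def snorm (s : Fin d → ℝ) (n : Nd d) : ℝ := ∑ i, s i * (n i : ℝ)

/-- A subcritical pair `(l,k)`. -/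
def Subcritical {L : Type} (s : Fin d → ℝ) (η : ℝ) (reg : L → ℝ) (ν : ℝ)
    (l : L) (k : MNd d) : Prop :=
  ν < η + reg l ∧
  ∀ k' : MNd d, 0 < k' → k' ≤ k →
    ν < η + (k'.sum fun n v => (ν - snorm s n) * (v : ℝ)) ∧
    ν < η + reg l + (k'.sum fun n v => (ν - snorm s n) * (v : ℝ))

/-- A subcritical multi-index. -/
def SubcriticalM (s : Fin d → ℝ) (η : ℝ) (reg : Option Lm → ℝ) (ν : ℝ)
    (β : MCoord Lm d) : Prop :=
  ∀ (l : Option Lm) (k : MNd d), β (Sum.inl (l, k)) ≠ 0 → Subcritical s η reg ν l k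

/-- Homogeneity `|β|`. -/
def homg (s : Fin d → ℝ) (η : ℝ) (α : Option Lm → ℝ) (β : MCoord Lm d) : ℝ :=
  β.sum fun x v =>
    match x with
    | Sum.inl (l, k) =>
        (α l + k.sum fun n v' => (η - snorm s n) * (v' : ℝ)) * (v : ℝ)
    | Sum.inr n => (snorm s n - η) * (v : ℝ)

/-- The set `N_min`. -/
def Nmin (s : Fin d → ℝ) (η : ℝ) (reg : Option Lm → ℝ) (ν : ℝ) :
    Set (MCoord Lm d) :=
  {β | brkt β = 1 ∧ SubcriticalM s η reg ν β ∧
       ∀ n : Nd d, snorm s n < ν → β (Sum.inr n) = 0}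

/-- The set `N`. -/
def NSet (s : Fin d → ℝ) (η : ℝ) (reg : Option Lm → ℝ) (ν : ℝ) :
    Set (MCoord Lm d) :=
  {β | β ∈ Nmin s η reg ν ∧ 0 < nh β}

/-- The purely polynomial set `P = {e_n}`. -/
def PolySet : Set (MCoord Lm d) :=
  {β | ∃ n : Nd d, β = Finsupp.single (Sum.inr n) 1}

/-- `populated = P ∪ N`. -/
def Populated (s : Fin d → ℝ) (η : ℝ) (reg : Option Lm → ℝ) (ν : ℝ) :
    Set (MCoord Lm d) :=
  PolySet ∪ NSet s η reg ν

/-- The subcritical coefficient `(z^{γ'} D^{(n')})^{sc}_β^γ`. -/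
def coefZDsc (s : Fin d → ℝ) (η : ℝ) (reg : Option Lm → ℝ) (ν : ℝ)
    (γ' : MCoord Lm d) (n' : Nd d) (β γ : MCoord Lm d) : ℝ :=
  (γ.sum fun x v =>
    match x with
    | Sum.inl (l, k) =>
        if Subcritical s η reg ν l (k + Finsupp.single n' 1) then
          (v : ℝ) * ((k n' : ℝ) + 1) *
            (if β + Finsupp.single (Sum.inl (l, k)) 1 =
                γ + Finsupp.single (Sum.inl (l, k + Finsupp.single n' 1)) 1 + γ'
             then 1 else 0)
        else 0
    | Sum.inr _ => 0) +
  ((γ (Sum.inr n') : ℝ) *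
    (if β + Finsupp.single (Sum.inr n') 1 = γ + γ' then 1 else 0))

/-- The subcritical coefficient `(∂_i)^{sc}_β^γ`. -/
def coefPartialSc (s : Fin d → ℝ) (η : ℝ) (reg : Option Lm → ℝ) (ν : ℝ)
    (i : Fin d) (β γ : MCoord Lm d) : ℝ :=
  ∑ᶠ n : Nd d,
    ((n i : ℝ) + 1) *
      coefZDsc s η reg ν (Finsupp.single (Sum.inr (n + unitNd i)) 1) n β γ

/-- `⌊β⌋ := Σ_n |n|·β(n)`. -/
def polydeg (s : Fin d → ℝ) (β : MCoord Lm d) : ℝ :=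
  β.sum fun x v =>
    match x with
    | Sum.inl _ => 0
    | Sum.inr n => snorm s n * (v : ℝ)

/-- `Σ_n (|n| − ν)·β(n)`. -/
def polyexcess (s : Fin d → ℝ) (ν : ℝ) (β : MCoord Lm d) : ℝ :=
  β.sum fun x v =>
    match x with
    | Sum.inl _ => 0
    | Sum.inr n => (snorm s n - ν) * (v : ℝ)

/-- `|β|_≺ := λ₁·ℓ(β) + λ₂·⟦β⟧ + λ₃·⌊β⌋`. -/
def ordPrec (s : Fin d → ℝ) (lam1 lam2 lam3 : ℝ) (β : MCoord Lm d) : ℝ :=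
  lam1 * (mlen β : ℝ) + lam2 * (nh β : ℝ) + lam3 * polydeg s β

/-! `|·|_≺` is additive, and a nonzero coefficient `(z^{γ'}D^{(n')})_β^γ` forces either
`β + e_{(l,k)} = γ + e_{(l,k+e_{n'})} + γ'`, where the two unit vectors have the same `|·|_≺`,
or `β + e_{n'} = γ + γ'`. Hence `|β|_≺ - |γ|_≺` is `|γ'|_≺` or `|γ'|_≺ - λ₁ - λ₃|n'|`; both are
positive for `γ'` with noise (`|γ'|_≺ ≥ λ₁ + λ₂ > λ₁ + λ₃|n'|`) and for the `γ' = e_{n+e_i}`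
occurring in `∂_i` (`|γ'|_≺ = λ₁ + λ₃(|n| + s_i)`). -/

lemma mlen_add {I : Type} (a b : I →₀ ℕ) : mlen (a + b) = mlen a + mlen b :=
  Finsupp.sum_add_index' (fun _ => rfl) (fun _ _ _ => rfl)

lemma mlen_single {I : Type} (x : I) (v : ℕ) : mlen (Finsupp.single x v) = v :=
  Finsupp.sum_single_index rfl

lemma nh_add (a b : MCoord Lm d) : nh (a + b) = nh a + nh b := by
  unfold nh
  apply Finsupp.sum_add_index'
  · rintro (⟨_ | _, _⟩ | _) <;> rfl
  · rintro (⟨_ | _, _⟩ | _) _ _ <;> rfl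

lemma nh_single_inl (l : Option Lm) (k : MNd d) :
    nh (Finsupp.single (Sum.inl (l, k)) 1 : MCoord Lm d) = l.isSome.toNat := by
  unfold nh
  rw [Finsupp.sum_single_index] <;> cases l <;> rfl

lemma nh_single_inr (n : Nd d) : nh (Finsupp.single (Sum.inr n) 1 : MCoord Lm d) = 0 :=
  Finsupp.sum_single_index rfl

lemma nh_le_mlen (β : MCoord Lm d) : nh β ≤ mlen β :=
  Finset.sum_le_sum fun x _ => by rcases x with ⟨_ | _, _⟩ | _ <;> simp

lemma snorm_nonneg {s : Fin d → ℝ} (hs : ∀ i, 0 ≤ s i) (n : Nd d) : 0 ≤ snorm s n :=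
  Finset.sum_nonneg fun i _ => mul_nonneg (hs i) (Nat.cast_nonneg _)

lemma snorm_add (s : Fin d → ℝ) (a b : Nd d) : snorm s (a + b) = snorm s a + snorm s b := by
  simp only [snorm, ← Finset.sum_add_distrib, Pi.add_apply, Nat.cast_add, mul_add]

lemma snorm_unitNd (s : Fin d → ℝ) (i : Fin d) : snorm s (unitNd i) = s i := by
  simp [snorm, unitNd, Pi.single_apply]

lemma polydeg_add (s : Fin d → ℝ) (a b : MCoord Lm d) :
    polydeg s (a + b) = polydeg s a + polydeg s b := by
  unfold polydeg
  apply Finsupp.sum_add_index'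
  · rintro (_ | _) <;> simp
  · rintro (_ | _) _ _ <;> simp [mul_add]

lemma polydeg_single_inl (s : Fin d → ℝ) (l : Option Lm) (k : MNd d) :
    polydeg s (Finsupp.single (Sum.inl (l, k)) 1 : MCoord Lm d) = 0 :=
  Finsupp.sum_single_index rfl

lemma polydeg_single_inr (s : Fin d → ℝ) (n : Nd d) :
    polydeg s (Finsupp.single (Sum.inr n) 1 : MCoord Lm d) = snorm s n := by
  unfold polydeg
  rw [Finsupp.sum_single_index] <;> simp

lemma polydeg_nonneg {s : Fin d → ℝ} (hs : ∀ i, 0 ≤ s i) (β : MCoord Lm d) :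
    0 ≤ polydeg s β :=
  Finset.sum_nonneg fun x _ => by
    rcases x with _ | n
    · exact le_rfl
    · exact mul_nonneg (snorm_nonneg hs n) (Nat.cast_nonneg _)

section ordPrec

variable (s : Fin d → ℝ) (lam1 lam2 lam3 : ℝ)

lemma ordPrec_add (a b : MCoord Lm d) :
    ordPrec s lam1 lam2 lam3 (a + b) =
      ordPrec s lam1 lam2 lam3 a + ordPrec s lam1 lam2 lam3 b := by
  simp only [ordPrec, mlen_add, nh_add, polydeg_add, Nat.cast_add]
  ring

lemma ordPrec_single_inl (l : Option Lm) (k : MNd d) :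
    ordPrec s lam1 lam2 lam3 (Finsupp.single (Sum.inl (l, k)) 1 : MCoord Lm d) =
      lam1 + lam2 * l.isSome.toNat := by
  simp [ordPrec, mlen_single, nh_single_inl, polydeg_single_inl]

lemma ordPrec_single_inr (n : Nd d) :
    ordPrec s lam1 lam2 lam3 (Finsupp.single (Sum.inr n) 1 : MCoord Lm d) =
      lam1 + lam3 * snorm s n := by
  simp [ordPrec, mlen_single, nh_single_inr, polydeg_single_inr]

end ordPrec

lemma lam1_add_lam2_le_ordPrec {s : Fin d → ℝ} (hs : ∀ i, 0 ≤ s i) {lam1 lam2 lam3 : ℝ}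
    (h1 : 0 ≤ lam1) (h2 : 0 ≤ lam2) (h3 : 0 ≤ lam3) {γ : MCoord Lm d} (hγ : 1 ≤ nh γ) :
    lam1 + lam2 ≤ ordPrec s lam1 lam2 lam3 γ := by
  have hnh : (1 : ℝ) ≤ nh γ := by exact_mod_cast hγ
  have hlen : (1 : ℝ) ≤ mlen γ := by exact_mod_cast hγ.trans (nh_le_mlen γ)
  have hpoly := mul_nonneg h3 (polydeg_nonneg hs γ)
  unfold ordPrec
  nlinarith

lemma coefZD_ne_zero_cases {γ' : MCoord Lm d} {n' : Nd d} {β γ : MCoord Lm d}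
    (h : coefZD γ' n' β γ ≠ 0) :
    (∃ l k, β + Finsupp.single (Sum.inl (l, k)) 1 =
        γ + Finsupp.single (Sum.inl (l, k + Finsupp.single n' 1)) 1 + γ') ∨
      β + Finsupp.single (Sum.inr n') 1 = γ + γ' := by
  contrapose! h
  obtain ⟨hinl, hinr⟩ := h
  rw [coefZD, Finsupp.sum, Finset.sum_eq_zero, if_neg hinr, mul_zero, add_zero]
  rintro (⟨l, k⟩ | n) _
  · simp [hinl l k]
  · rfl

lemma ordPrec_lt_of_coefZD_ne_zero {s : Fin d → ℝ} {lam1 lam2 lam3 : ℝ}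
    {γ' : MCoord Lm d} {n' : Nd d} {β γ : MCoord Lm d}
    (hpos : 0 < ordPrec s lam1 lam2 lam3 γ')
    (hinr : ordPrec s lam1 lam2 lam3 (Finsupp.single (Sum.inr n') 1 : MCoord Lm d) <
      ordPrec s lam1 lam2 lam3 γ')
    (h : coefZD γ' n' β γ ≠ 0) :
    ordPrec s lam1 lam2 lam3 γ < ordPrec s lam1 lam2 lam3 β := by
  rcases coefZD_ne_zero_cases h with ⟨l, k, heq⟩ | heq
  · have := congrArg (ordPrec s lam1 lam2 lam3) heq
    simp only [ordPrec_add, ordPrec_single_inl] at this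
    linarith
  · have := congrArg (ordPrec s lam1 lam2 lam3) heq
    simp only [ordPrec_add] at this
    linarith

lemma exists_coefZD_ne_zero_of_coefPartial_ne_zero {i : Fin d} {β γ : MCoord Lm d}
    (h : coefPartial i β γ ≠ 0) :
    ∃ n : Nd d, coefZD (Finsupp.single (Sum.inr (n + unitNd i)) 1) n β γ ≠ 0 := by
  contrapose! h
  exact finsum_eq_zero_of_forall_eq_zero fun n => by rw [h n, mul_zero]

theorem stmt16_general {Lm : Type} {d : ℕ}
    (s : Fin d → ℝ) (hs : ∀ i, 1 ≤ s i) (η : ℝ)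
    (lam1 lam2 lam3 : ℝ) (h1 : 0 < lam1) (h2 : 0 < lam2) (h3 : 0 < lam3)
    (h23 : lam3 * η ≤ lam2) (β γ : MCoord Lm d) :
    (∀ (γ' : MCoord Lm d) (n' : Nd d), 1 ≤ nh γ' → snorm s n' < η →
      coefZD γ' n' β γ ≠ 0 →
      ordPrec s lam1 lam2 lam3 γ < ordPrec s lam1 lam2 lam3 β) ∧
    (∀ i : Fin d, coefPartial i β γ ≠ 0 →
      ordPrec s lam1 lam2 lam3 γ < ordPrec s lam1 lam2 lam3 β) := by
  have hs0 i : 0 ≤ s i := zero_le_one.trans (hs i)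
  refine ⟨fun γ' n' hγ' hn' h => ?_, fun i h => ?_⟩
  · have hlow := lam1_add_lam2_le_ordPrec hs0 h1.le h2.le h3.le hγ'
    have hη := mul_lt_mul_of_pos_left hn' h3
    refine ordPrec_lt_of_coefZD_ne_zero (by linarith) ?_ h
    rw [ordPrec_single_inr]
    linarith
  · obtain ⟨n, hn⟩ := exists_coefZD_ne_zero_of_coefPartial_ne_zero h
    have hsn := mul_nonneg h3.le (snorm_nonneg hs0 n)
    have hsi := mul_pos h3 (zero_lt_one.trans_le (hs i))
    refine ordPrec_lt_of_coefZD_ne_zero ?_ ?_ hn <;>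
      simp only [ordPrec_single_inr, snorm_add, snorm_unitNd] <;> linarith

theorem stmt16 {Lm : Type} [Fintype Lm] {d : ℕ} (hd : 1 ≤ d)
    (s : Fin d → ℝ) (hs : ∀ i, 1 ≤ s i) (η : ℝ) (hη : 0 < η)
    (lam1 lam2 lam3 : ℝ) (h1 : 0 < lam1) (h2 : 0 < lam2) (h3 : 0 < lam3)
    (h23 : lam3 * η ≤ lam2) (β γ : MCoord Lm d) :
    (∀ (γ' : MCoord Lm d) (n' : Nd d), 1 ≤ nh γ' → snorm s n' < η →
      coefZD γ' n' β γ ≠ 0 →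
      ordPrec s lam1 lam2 lam3 γ < ordPrec s lam1 lam2 lam3 β) ∧
    (∀ i : Fin d, coefPartial i β γ ≠ 0 →
      ordPrec s lam1 lam2 lam3 γ < ordPrec s lam1 lam2 lam3 β) :=
  stmt16_general s hs η lam1 lam2 lam3 h1 h2 h3 h23 β γ
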